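/- arXiv:0910.4893 — 2 statements merged into one kernel-verified Lean document; each statement's English description precedes it below -/
import Mathlib

section
/- Lens transform for the isotropic time-independent harmonic potential. Let d ≥ 1, ω > 0 and λ ∈ ℝ. Let v : ℝ × E → ℂ be smooth and satisfy i ∂_t v(t,x) + ½ Δv(t,x) = λ |v(t,x)|^{4/d} v(t,x) for all (t,x) ∈ ℝ × E. Define, for |t| < π/(2ω) and x ∈ E, u(t,x) = cos(ωt)^{−d/2} · v( tan(ωt)/ω , x/cos(ωt) ) · exp( −i (ω/2) |x|² tan(ωt) ). Then i ∂_t u(t,x) + ½ Δu(t,x) = (ω²/2) |x|² u(t,x) + λ |u(t,x)|^{4/d} u(t,x) for all t with |t| < π/(2ω) and all x ∈ E. -/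
noncomputable section

open MeasureTheory Real Complex

/-- Euclidean space `ℝ^d`. -/
abbrev Esp (d : ℕ) := EuclideanSpace ℝ (Fin d)

/-- Partial derivative in the `j`-th space direction. -/
def sderiv {d : ℕ} (j : Fin d) (f : Esp d → ℂ) (x : Esp d) : ℂ :=
  fderiv ℝ f x (EuclideanSpace.single j 1)

/-- Spatial Laplacian: sum of the second partial derivatives. -/
def lap {d : ℕ} (f : Esp d → ℂ) (x : Esp d) : ℂ :=
  ∑ j, sderiv j (fun y => sderiv j f y) x

variable {d : ℕ}

lemma clm_apply_eq_sum (L : Esp d →L[ℝ] ℂ) (w : Esp d) :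
    L w = ∑ j, ((w j : ℝ) : ℂ) * L (EuclideanSpace.single j 1) := by
  have hw : w = ∑ j, (w j) • EuclideanSpace.single j (1:ℝ) := by
    have h := (EuclideanSpace.basisFun (Fin d) ℝ).sum_repr w
    simp only [EuclideanSpace.basisFun_repr, EuclideanSpace.basisFun_apply] at h
    exact h.symm
  conv_lhs => rw [hw]
  rw [map_sum]
  refine Finset.sum_congr rfl fun j _ => ?_
  rw [L.map_smul]
  simp [Complex.real_smul]

lemma hasFDerivAt_exppart (b : ℂ) (x : Esp d) :
    HasFDerivAt (fun z : Esp d => Complex.exp (b * ((‖z‖^2 : ℝ) : ℂ)))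
      ((Complex.exp (b * ((‖x‖^2:ℝ):ℂ)) * (2*b)) • (Complex.ofRealCLM.comp (innerSL ℝ x))) x := by
  have h1 : HasFDerivAt (fun z : Esp d => (‖z‖^2 : ℝ)) ((2:ℕ) • (innerSL ℝ x)) x :=
    (hasStrictFDerivAt_norm_sq x).hasFDerivAt
  have h2 : HasFDerivAt (fun z : Esp d => ((‖z‖^2 : ℝ) : ℂ))
      (Complex.ofRealCLM.comp ((2:ℕ) • (innerSL ℝ x))) x :=
    Complex.ofRealCLM.hasFDerivAt.comp x h1
  have h3 := (h2.const_mul b).cexp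
  refine h3.congr_fderiv ?_
  ext w
  simp
  ring

lemma hasFDerivAt_comp_smul (g : Esp d → ℂ) (a : ℝ) (x : Esp d)
    (hg : DifferentiableAt ℝ g (a • x)) :
    HasFDerivAt (fun z : Esp d => g (a • z)) (a • (fderiv ℝ g (a • x))) x := by
  have h0 : HasFDerivAt (fun z : Esp d => a • z) (a • ContinuousLinearMap.id ℝ (Esp d)) x := by
    have h := (a • ContinuousLinearMap.id ℝ (Esp d)).hasFDerivAt (x := x)
    convert h using 2 with z
    try simp
  have h := hg.hasFDerivAt.comp x h0
  refine HasFDerivAt.congr_fderiv h ?_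
  ext w
  simp

lemma contDiff_sderiv {f : Esp d → ℂ} (hf : ContDiff ℝ (⊤ : ℕ∞) f) (j : Fin d) :
    ContDiff ℝ (⊤ : ℕ∞) (sderiv j f) := by
  have h := ((ContinuousLinearMap.apply ℝ ℂ (EuclideanSpace.single j (1:ℝ))).contDiff).comp
    (hf.fderiv_right (m := (⊤ : ℕ∞)) (by simp))
  exact h

lemma sderiv_special (f : Esp d → ℂ) (hf : Differentiable ℝ f) (a : ℝ) (b K : ℂ)
    (j : Fin d) (z : Esp d) :
    sderiv j (fun w => K * f (a • w) * Complex.exp (b * ((‖w‖^2:ℝ):ℂ))) z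
      = (K * (a:ℂ)) * sderiv j f (a • z) * Complex.exp (b * ((‖z‖^2:ℝ):ℂ))
        + (K * f (a • z) * Complex.exp (b * ((‖z‖^2:ℝ):ℂ))) * (2*b*((z j : ℝ):ℂ)) := by
  have h1 := hasFDerivAt_comp_smul f a z (hf _)
  have h2 := hasFDerivAt_exppart b z
  have hG := (h1.const_mul K).mul h2
  rw [sderiv, HasFDerivAt.fderiv (f := fun w : Esp d => K * f (a • w) * Complex.exp (b * ((‖w‖^2:ℝ):ℂ))) hG]
  simp only [sderiv, ContinuousLinearMap.add_apply, ContinuousLinearMap.smul_apply,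
    ContinuousLinearMap.comp_apply, ContinuousLinearMap.coe_smul', Pi.smul_apply,
    innerSL_apply_apply, Complex.ofRealCLM_apply, smul_eq_mul, Complex.real_smul,
    EuclideanSpace.inner_single_right, map_one, conj_trivial, mul_one]
  push_cast
  ring

lemma sderiv_def (j : Fin d) (f : Esp d → ℂ) :
    sderiv j f = fun x => fderiv ℝ f x (EuclideanSpace.single j 1) := rfl

lemma sderiv2_special (f : Esp d → ℂ) (hf : ContDiff ℝ (⊤ : ℕ∞) f) (a : ℝ) (b K : ℂ)
    (j : Fin d) (x : Esp d) :
    sderiv j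
      (fun z => (K * (a:ℂ)) * sderiv j f (a • z) * Complex.exp (b * ((‖z‖^2:ℝ):ℂ))
        + (K * f (a • z) * Complex.exp (b * ((‖z‖^2:ℝ):ℂ))) * (2*b*((z j : ℝ):ℂ))) x
    = (K*(a:ℂ)*(a:ℂ)) * sderiv j (fun y => sderiv j f y) (a•x)
        * Complex.exp (b * ((‖x‖^2:ℝ):ℂ))
      + (4*b*K*(a:ℂ)) * (((x j:ℝ):ℂ) * sderiv j f (a•x)) * Complex.exp (b * ((‖x‖^2:ℝ):ℂ))
      + (K * f (a•x) * Complex.exp (b * ((‖x‖^2:ℝ):ℂ))) * (4*b^2*((x j:ℝ):ℂ)^2)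
      + (K * f (a•x) * Complex.exp (b * ((‖x‖^2:ℝ):ℂ))) * (2*b) := by
  have q1 : HasFDerivAt (fun z : Esp d => sderiv j f (a • z)) (a • fderiv ℝ (sderiv j f) (a•x)) x :=
    hasFDerivAt_comp_smul _ a x (((contDiff_sderiv hf j).differentiable (by simp)) _)
  have q2 := hasFDerivAt_exppart (d := d) b x
  have q3 : HasFDerivAt (fun z : Esp d => ((z j : ℝ):ℂ))
      (Complex.ofRealCLM.comp (EuclideanSpace.proj j)) x :=
    Complex.ofRealCLM.hasFDerivAt.comp x (by exact (EuclideanSpace.proj (𝕜 := ℝ) j).hasFDerivAt)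
  have hG := ((hasFDerivAt_comp_smul f a x ((hf.differentiable (by simp)) _)).const_mul K).mul q2
  have hH := ((q1.const_mul (K*(a:ℂ))).mul q2).add (hG.mul (q3.const_mul (2*b)))
  rw [sderiv_def]
  beta_reduce
  rw [HasFDerivAt.fderiv (f := fun z : Esp d => (K * (a:ℂ)) * sderiv j f (a • z) * Complex.exp (b * ((‖z‖^2:ℝ):ℂ))
        + (K * f (a • z) * Complex.exp (b * ((‖z‖^2:ℝ):ℂ))) * (2*b*((z j : ℝ):ℂ))) hH]
  simp only [sderiv_def, ContinuousLinearMap.add_apply, ContinuousLinearMap.smul_apply,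
    ContinuousLinearMap.comp_apply, ContinuousLinearMap.coe_smul', Pi.smul_apply,
    innerSL_apply_apply, Complex.ofRealCLM_apply, smul_eq_mul, Complex.real_smul,
    EuclideanSpace.inner_single_right, map_one, conj_trivial, mul_one,
    PiLp.proj_apply, EuclideanSpace.single_apply, if_pos rfl, Pi.mul_apply]
  push_cast
  ring

lemma sum_coord_sq (x : Esp d) : ∑ j, ((x j : ℝ):ℂ)^2 = ((‖x‖^2:ℝ):ℂ) := by
  have h : ∑ j, (x j)^2 = ‖x‖^2 := by
    rw [EuclideanSpace.norm_eq, Real.sq_sqrt (by positivity)]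
    simp [Real.norm_eq_abs, sq_abs]
  rw [← h]
  push_cast
  rfl

lemma lap_special (f : Esp d → ℂ) (hf : ContDiff ℝ (⊤ : ℕ∞) f) (a : ℝ) (b K : ℂ) (x : Esp d) :
    lap (fun w => K * f (a • w) * Complex.exp (b * ((‖w‖^2:ℝ):ℂ))) x
      = (K*(a:ℂ)*(a:ℂ)) * lap f (a • x) * Complex.exp (b * ((‖x‖^2:ℝ):ℂ))
        + (4*b*K*(a:ℂ)) * (∑ j, ((x j:ℝ):ℂ) * sderiv j f (a•x))
            * Complex.exp (b * ((‖x‖^2:ℝ):ℂ))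
        + (K * f (a•x) * Complex.exp (b * ((‖x‖^2:ℝ):ℂ))) * (4*b^2*((‖x‖^2:ℝ):ℂ))
        + (K * f (a•x) * Complex.exp (b * ((‖x‖^2:ℝ):ℂ))) * (2*b*(d:ℂ)) := by
  have hfd : Differentiable ℝ f := hf.differentiable (by simp)
  rw [lap]
  have hrw : ∀ j : Fin d,
      (fun z => sderiv j (fun w => K * f (a • w) * Complex.exp (b * ((‖w‖^2:ℝ):ℂ))) z)
      = (fun z => (K * (a:ℂ)) * sderiv j f (a • z) * Complex.exp (b * ((‖z‖^2:ℝ):ℂ))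
        + (K * f (a • z) * Complex.exp (b * ((‖z‖^2:ℝ):ℂ))) * (2*b*((z j : ℝ):ℂ))) := by
    intro j
    funext z
    exact sderiv_special f hfd a b K j z
  calc ∑ j, sderiv j
        (fun z => sderiv j (fun w => K * f (a • w) * Complex.exp (b * ((‖w‖^2:ℝ):ℂ))) z) x
      = ∑ j, ((K*(a:ℂ)*(a:ℂ)) * sderiv j (fun y => sderiv j f y) (a•x)
            * Complex.exp (b * ((‖x‖^2:ℝ):ℂ))
          + (4*b*K*(a:ℂ)) * (((x j:ℝ):ℂ) * sderiv j f (a•x))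
              * Complex.exp (b * ((‖x‖^2:ℝ):ℂ))
          + (K * f (a•x) * Complex.exp (b * ((‖x‖^2:ℝ):ℂ))) * (4*b^2*((x j:ℝ):ℂ)^2)
          + (K * f (a•x) * Complex.exp (b * ((‖x‖^2:ℝ):ℂ))) * (2*b)) := by
        refine Finset.sum_congr rfl fun j _ => ?_
        rw [hrw j]
        exact sderiv2_special f hf a b K j x
    _ = _ := by
        simp only [Finset.sum_add_distrib, ← Finset.mul_sum, ← Finset.sum_mul,
          Finset.sum_const, Finset.card_univ, Fintype.card_fin, nsmul_eq_mul,
          sum_coord_sq]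
        rw [lap]
        push_cast
        ring

/-- Lens transform for the isotropic time-independent harmonic potential: if `v` solves
the `L²`-critical NLS `i∂ₜv + ½Δv = λ|v|^{4/d}v`, then
`u(t,x) = cos(ωt)^{−d/2} v(tan(ωt)/ω, x/cos(ωt)) e^{−i(ω/2)|x|² tan(ωt)}`
solves `i∂ₜu + ½Δu = (ω²/2)|x|²u + λ|u|^{4/d}u` for `|t| < π/(2ω)`. -/
theorem lens_transform_harmonic
    (d : ℕ) (hd : 1 ≤ d) (ω : ℝ) (hω : 0 < ω) (lam : ℝ)
    (v : ℝ → Esp d → ℂ) (hv : ContDiff ℝ (⊤ : ℕ∞) (Function.uncurry v))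
    (hveq : ∀ (t : ℝ) (x : Esp d),
      Complex.I * deriv (fun s => v s x) t + (1 / 2) * lap (v t) x
        = ((lam : ℝ) : ℂ) * (((‖v t x‖ ^ (2:ℕ)) ^ (2 / (d : ℝ)) : ℝ) : ℂ) * v t x)
    (u : ℝ → Esp d → ℂ)
    (hu : ∀ (t : ℝ) (x : Esp d), |t| < Real.pi / (2 * ω) →
      u t x = (((Real.cos (ω * t) ^ (-(d : ℝ) / 2) : ℝ)) : ℂ)
        * v (Real.tan (ω * t) / ω) ((Real.cos (ω * t))⁻¹ • x)
        * Complex.exp (-Complex.I * ((ω / 2 : ℝ) : ℂ)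
            * ((‖x‖ ^ (2:ℕ) : ℝ) : ℂ) * ((Real.tan (ω * t) : ℝ) : ℂ))) :
    ∀ (t : ℝ), |t| < Real.pi / (2 * ω) → ∀ (x : Esp d),
      Complex.I * deriv (fun s => u s x) t + (1 / 2) * lap (u t) x
        = ((ω ^ 2 / 2 : ℝ) : ℂ) * ((‖x‖ ^ (2:ℕ) : ℝ) : ℂ) * u t x
          + ((lam : ℝ) : ℂ) * (((‖u t x‖ ^ (2:ℕ)) ^ (2 / (d : ℝ)) : ℝ) : ℂ) * u t x := by
  
  intro t ht x
  have hd0 : (d:ℝ) ≠ 0 := Nat.cast_ne_zero.mpr (by omega)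
  have hc : 0 < Real.cos (ω * t) := by
    apply Real.cos_pos_of_mem_Ioo
    have h1 : |ω * t| < Real.pi / 2 := by
      rw [abs_mul, abs_of_pos hω]
      calc ω * |t| < ω * (Real.pi / (2 * ω)) := by
            exact mul_lt_mul_of_pos_left ht hω
        _ = Real.pi / 2 := by field_simp
    constructor
    · linarith [abs_lt.mp h1]
    · exact (abs_lt.mp h1).2
  have hc0 : Real.cos (ω * t) ≠ 0 := hc.ne'
  -- time derivative
  have hωr : HasDerivAt (fun r : ℝ => ω * r) ω t := by
    simpa using (hasDerivAt_id t).const_mul ω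
  have hcos : HasDerivAt (fun r : ℝ => Real.cos (ω*r)) (-Real.sin (ω*t) * ω) t := hωr.cos
  have hA : HasDerivAt (fun r : ℝ => Real.cos (ω*r) ^ (-(d:ℝ)/2))
      ((-(d:ℝ)/2) * Real.cos (ω*t) ^ ((-(d:ℝ)/2) - 1) * (-Real.sin (ω*t)*ω)) t := by
    have h := hcos.rpow_const (p := -(d:ℝ)/2) (Or.inl hc0)
    convert h using 1
    ring
  have hAc := hA.ofReal_comp
  have htan : HasDerivAt (fun r : ℝ => Real.tan (ω*r)) (1 / Real.cos (ω*t)^2 * ω) t :=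
    (Real.hasDerivAt_tan hc0).comp t hωr
  have hτd := htan.div_const ω
  have hinv : HasDerivAt (fun r : ℝ => (Real.cos (ω*r))⁻¹)
      (-(-Real.sin (ω*t) * ω) / Real.cos (ω*t)^2) t := hcos.inv hc0
  have hyd := hinv.smul_const x
  have hg := hτd.prodMk hyd
  have hF : HasFDerivAt (Function.uncurry v)
      (fderiv ℝ (Function.uncurry v) (Real.tan (ω*t)/ω, (Real.cos (ω*t))⁻¹ • x))
      (Real.tan (ω*t)/ω, (Real.cos (ω*t))⁻¹ • x) :=
    ((hv.differentiable (by simp)) _).hasFDerivAt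
  have hB := hF.comp_hasDerivAt t hg
  have hCin := htan.ofReal_comp
  have hCm := hCin.const_mul (-Complex.I * ((ω/2:ℝ):ℂ) * ((‖x‖^(2:ℕ):ℝ):ℂ))
  have hC := hCm.cexp
  have hW := (hAc.mul hB).mul hC
  have hud : deriv (fun s => u s x) t =
      ((((-(d:ℝ)/2) * Real.cos (ω*t) ^ ((-(d:ℝ)/2) - 1) * (-Real.sin (ω*t)*ω) : ℝ) : ℂ)
          * v (Real.tan (ω*t)/ω) ((Real.cos (ω*t))⁻¹ • x)
        + ((Real.cos (ω*t) ^ (-(d:ℝ)/2) : ℝ) : ℂ)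
          * (fderiv ℝ (Function.uncurry v) (Real.tan (ω*t)/ω, (Real.cos (ω*t))⁻¹ • x))
              ((1 / Real.cos (ω*t)^2 * ω / ω : ℝ),
               (-(-Real.sin (ω*t) * ω) / Real.cos (ω*t)^2 : ℝ) • x))
        * Complex.exp (-Complex.I * ((ω/2:ℝ):ℂ) * ((‖x‖^(2:ℕ):ℝ):ℂ)
            * ((Real.tan (ω*t) : ℝ) : ℂ))
      + ((Real.cos (ω*t) ^ (-(d:ℝ)/2) : ℝ) : ℂ)
          * v (Real.tan (ω*t)/ω) ((Real.cos (ω*t))⁻¹ • x)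
          * (Complex.exp (-Complex.I * ((ω/2:ℝ):ℂ) * ((‖x‖^(2:ℕ):ℝ):ℂ)
              * ((Real.tan (ω*t) : ℝ) : ℂ))
            * (-Complex.I * ((ω/2:ℝ):ℂ) * ((‖x‖^(2:ℕ):ℝ):ℂ)
                * ((1 / Real.cos (ω*t)^2 * ω : ℝ) : ℂ))) := by
    have hopen : IsOpen {r : ℝ | |r| < Real.pi/(2*ω)} :=
      isOpen_lt continuous_abs continuous_const
    have hev : (fun r => u r x) =ᶠ[nhds t] (fun r =>
        (((Real.cos (ω * r) ^ (-(d : ℝ) / 2) : ℝ)) : ℂ)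
        * v (Real.tan (ω * r) / ω) ((Real.cos (ω * r))⁻¹ • x)
        * Complex.exp (-Complex.I * ((ω / 2 : ℝ) : ℂ)
            * ((‖x‖ ^ (2:ℕ) : ℝ) : ℂ) * ((Real.tan (ω * r) : ℝ) : ℂ))) := by
      filter_upwards [hopen.mem_nhds ht] with r hr using hu r x hr
    rw [hev.deriv_eq]
    exact hW.deriv
  -- slice smoothness
  have hvτ : ContDiff ℝ (⊤ : ℕ∞) (v (Real.tan (ω*t)/ω)) :=
    hv.comp ((contDiff_const (c := Real.tan (ω*t)/ω)).prodMk contDiff_id)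
  -- u t as the special spatial form
  have hut : u t = fun z => ((Real.cos (ω*t) ^ (-(d:ℝ)/2) : ℝ) : ℂ)
      * (v (Real.tan (ω*t)/ω)) ((Real.cos (ω*t))⁻¹ • z)
      * Complex.exp ((-Complex.I * ((ω/2:ℝ):ℂ) * ((Real.tan (ω*t):ℝ):ℂ))
          * ((‖z‖^2:ℝ):ℂ)) := by
    funext z
    rw [hu t z ht]
    congr 1
    congr 1
    push_cast
    ring
  have hlap := lap_special (v (Real.tan (ω*t)/ω)) hvτ (Real.cos (ω*t))⁻¹
      (-Complex.I * ((ω/2:ℝ):ℂ) * ((Real.tan (ω*t):ℝ):ℂ))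
      ((Real.cos (ω*t) ^ (-(d:ℝ)/2) : ℝ) : ℂ) x
  -- fderiv splitting
  set L := fderiv ℝ (Function.uncurry v)
      (Real.tan (ω*t)/ω, (Real.cos (ω*t))⁻¹ • x) with hLdef
  have hcurve : HasDerivAt (fun r : ℝ => (r, (Real.cos (ω*t))⁻¹ • x))
      ((1:ℝ), (0: Esp d)) (Real.tan (ω*t)/ω) :=
    (hasDerivAt_id _).prodMk (hasDerivAt_const _ _)
  have hL1 : HasDerivAt (fun s => v s ((Real.cos (ω*t))⁻¹ • x)) (L ((1:ℝ), (0:Esp d)))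
      (Real.tan (ω*t)/ω) := by have := hF.comp_hasDerivAt _ hcurve; exact this
  have hVt : L ((1:ℝ), (0:Esp d))
      = deriv (fun s => v s ((Real.cos (ω*t))⁻¹ • x)) (Real.tan (ω*t)/ω) := hL1.deriv.symm
  have hinc : HasFDerivAt (fun z : Esp d => ((Real.tan (ω*t)/ω : ℝ), z))
      ((0 : Esp d →L[ℝ] ℝ).prod (ContinuousLinearMap.id ℝ (Esp d)))
      ((Real.cos (ω*t))⁻¹ • x) :=
    (hasFDerivAt_const _ _).prodMk (hasFDerivAt_id _)
  have hslice : HasFDerivAt (v (Real.tan (ω*t)/ω))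
      (L.comp ((0 : Esp d →L[ℝ] ℝ).prod (ContinuousLinearMap.id ℝ (Esp d))))
      ((Real.cos (ω*t))⁻¹ • x) := hF.comp _ hinc
  have hLsum : ∀ r : ℝ, L ((1 / Real.cos (ω*t)^2 * ω / ω : ℝ), r • x)
      = ((1 / Real.cos (ω*t)^2 * ω / ω : ℝ) : ℂ) * L ((1:ℝ), (0:Esp d))
        + (r:ℂ) * ∑ j, ((x j:ℝ):ℂ)
            * sderiv j (v (Real.tan (ω*t)/ω)) ((Real.cos (ω*t))⁻¹ • x) := by
    intro r
    have h1 : ((1 / Real.cos (ω*t)^2 * ω / ω : ℝ), r • x)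
        = (1 / Real.cos (ω*t)^2 * ω / ω : ℝ) • ((1:ℝ), (0:Esp d)) + r • ((0:ℝ), x) := by
      simp [Prod.ext_iff]
    rw [h1, map_add, L.map_smul, L.map_smul]
    have h2 : L ((0:ℝ), x) = ∑ j, ((x j:ℝ):ℂ)
        * sderiv j (v (Real.tan (ω*t)/ω)) ((Real.cos (ω*t))⁻¹ • x) := by
      have h3 : L ((0:ℝ), x)
          = (fderiv ℝ (v (Real.tan (ω*t)/ω)) ((Real.cos (ω*t))⁻¹ • x)) x := by
        rw [hslice.fderiv]
        simp
      rw [h3]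
      exact clm_apply_eq_sum _ x
    rw [h2]
    simp only [Complex.real_smul]
  -- nonlinearity
  have hnu : ((‖u t x‖^(2:ℕ))^(2/(d:ℝ)) : ℝ)
      = (Real.cos (ω*t)^2)⁻¹
        * ((‖v (Real.tan (ω*t)/ω) ((Real.cos (ω*t))⁻¹ • x)‖^(2:ℕ))^(2/(d:ℝ))) := by
    rw [hu t x ht]
    have harg : -Complex.I * ((ω/2:ℝ):ℂ) * ((‖x‖^(2:ℕ):ℝ):ℂ) * ((Real.tan (ω*t):ℝ):ℂ)
        = ((-(ω/2) * ‖x‖^(2:ℕ) * Real.tan (ω*t) : ℝ) : ℂ) * Complex.I := by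
      push_cast; ring
    rw [norm_mul, norm_mul, harg, Complex.norm_exp_ofReal_mul_I, mul_one,
        Complex.norm_real, Real.norm_eq_abs,
        abs_of_pos (Real.rpow_pos_of_pos hc _), mul_pow,
        Real.mul_rpow (sq_nonneg _) (sq_nonneg _)]
    congr 1
    have h1 : (Real.cos (ω*t) ^ (-(d:ℝ)/2))^(2:ℕ) = Real.cos (ω*t) ^ (-(d:ℝ)) := by
      rw [← Real.rpow_natCast (Real.cos (ω*t) ^ (-(d:ℝ)/2)) 2, ← Real.rpow_mul hc.le]
      norm_num
    rw [h1, ← Real.rpow_mul hc.le]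
    have h2 : -(d:ℝ) * (2/(d:ℝ)) = -2 := by field_simp
    rw [h2, show (-2:ℝ) = -((2:ℕ):ℝ) by norm_num, Real.rpow_neg hc.le, Real.rpow_natCast]
  -- real coefficient identities
  have hsec : (Real.cos (ω*t)^2)⁻¹ = 1 + Real.tan (ω*t)^2 := by
    rw [← Real.inv_one_add_tan_sq hc0, inv_inv]
  have hτdr : (1 / Real.cos (ω*t)^2 * ω / ω : ℝ) = 1 + Real.tan (ω*t)^2 := by
    rw [mul_div_assoc, div_self hω.ne', mul_one, one_div, hsec]
  have hrdr : (-(-Real.sin (ω*t) * ω) / Real.cos (ω*t)^2 : ℝ)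
      = ω * Real.tan (ω*t) * (Real.cos (ω*t))⁻¹ := by
    rw [Real.tan_eq_sin_div_cos]
    field_simp
  have hcir : (1 / Real.cos (ω*t)^2 * ω : ℝ) = ω * (1 + Real.tan (ω*t)^2) := by
    rw [one_div, hsec]; ring
  have hAr : (-(d:ℝ)/2 * Real.cos (ω*t) ^ ((-(d:ℝ)/2) - 1) * (-Real.sin (ω*t)*ω) : ℝ)
      = ((d:ℝ)*ω/2) * Real.tan (ω*t) * (Real.cos (ω*t) ^ (-(d:ℝ)/2)) := by
    rw [Real.rpow_sub_one hc0, Real.tan_eq_sin_div_cos]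
    field_simp
  have hC2r : (Real.cos (ω*t))⁻¹ * (Real.cos (ω*t))⁻¹ = 1 + Real.tan (ω*t)^2 := by
    rw [← hsec, sq, mul_inv]
  have hC2c : (((Real.cos (ω*t) : ℝ):ℂ))⁻¹ * (((Real.cos (ω*t) : ℝ):ℂ))⁻¹
      = 1 + (((Real.tan (ω*t) : ℝ):ℂ))^2 := by exact_mod_cast hC2r
  have heq := hveq (Real.tan (ω*t)/ω) ((Real.cos (ω*t))⁻¹ • x)
  -- assembling
  rw [hud, hnu, hut]
  beta_reduce
  rw [hlap]
  have hεe : Complex.exp ((-Complex.I * ((ω/2:ℝ):ℂ) * ((Real.tan (ω*t):ℝ):ℂ))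
        * ((‖x‖^2:ℝ):ℂ))
      = Complex.exp (-Complex.I * ((ω/2:ℝ):ℂ) * ((‖x‖^(2:ℕ):ℝ):ℂ)
          * ((Real.tan (ω*t):ℝ):ℂ)) := by
    congr 1
    ring
  rw [hεe, hLsum, hVt, hτdr, hrdr, hcir, hAr]
  push_cast [-Complex.ofReal_tan, -Complex.ofReal_cos, -Complex.ofReal_sin]
  linear_combination
    (((Real.cos (ω*t) ^ (-(d:ℝ)/2) : ℝ) : ℂ)
      * Complex.exp (-Complex.I * ((ω:ℂ)/2) * ((‖x‖:ℝ):ℂ)^2 * ((Real.tan (ω*t):ℝ):ℂ))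
      * (((Real.cos (ω*t) : ℝ):ℂ))⁻¹ * (((Real.cos (ω*t) : ℝ):ℂ))⁻¹) * heq
    - (Complex.I * ((Real.cos (ω*t) ^ (-(d:ℝ)/2) : ℝ) : ℂ)
      * Complex.exp (-Complex.I * ((ω:ℂ)/2) * ((‖x‖:ℝ):ℂ)^2 * ((Real.tan (ω*t):ℝ):ℂ))
      * deriv (fun s => v s ((Real.cos (ω*t))⁻¹ • x)) (Real.tan (ω*t)/ω)) * hC2c
    + ((ω:ℂ)^2 * ((Real.cos (ω*t) ^ (-(d:ℝ)/2) : ℝ) : ℂ)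
      * v (Real.tan (ω*t)/ω) ((Real.cos (ω*t))⁻¹ • x)
      * Complex.exp (-Complex.I * ((ω:ℂ)/2) * ((‖x‖:ℝ):ℂ)^2 * ((Real.tan (ω*t):ℝ):ℂ))
      * ((‖x‖:ℝ):ℂ)^2 * (-1/2)) * Complex.I_sq
end
end

section
/- Generalized Avron–Herbst formula. Let d ≥ 1, σ > 0, and let h : ℝ → ℝ and b : ℝ → E be continuous (b is a time-dependent electric field). Let v : ℝ × E → ℂ be smooth and satisfy i ∂_t v(t,x) + ½ Δv(t,x) = h(t) |v(t,x)|^{2σ} v(t,x) for all (t,x) ∈ ℝ × E. Set p(t) = ∫₀ᵗ b(τ) dτ, c(t) = ∫₀ᵗ p(τ) dτ, S(t) = ½ ∫₀ᵗ |p(τ)|² dτ, and define u(t,x) = v(t, x + c(t)) · exp( −i ⟨x, p(t)⟩ − i S(t) ). Then i ∂_t u(t,x) + ½ Δu(t,x) = ⟨b(t), x⟩ u(t,x) + h(t) |u(t,x)|^{2σ} u(t,x) for all (t,x) ∈ ℝ × E. -/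
noncomputable section

open MeasureTheory Real Complex

lemma esp_sum_single {d : ℕ} (P : Esp d) :
    ∑ j, P j • EuclideanSpace.single j (1:ℝ) = P := by
  have := OrthonormalBasis.sum_repr (EuclideanSpace.basisFun (Fin d) ℝ) P
  simpa [EuclideanSpace.basisFun_apply, EuclideanSpace.basisFun_repr] using this

lemma esp_norm_sq {d : ℕ} (P : Esp d) : (‖P‖:ℝ)^(2:ℕ) = ∑ j, (P j)^(2:ℕ) := by
  rw [EuclideanSpace.norm_eq, Real.sq_sqrt (by positivity)]
  simp [sq_abs]

lemma clm_sum {d : ℕ} (L : Esp d →L[ℝ] ℂ) (P : Esp d) :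
    L P = ∑ j, (P j : ℂ) * L (EuclideanSpace.single j 1) := by
  conv_lhs => rw [← esp_sum_single P]
  rw [map_sum]
  congr 1; ext j
  rw [L.map_smul]
  simp [Complex.real_smul]



lemma lap_formula (d : ℕ) (w : Esp d → ℂ) (hw : ContDiff ℝ (⊤ : ℕ∞) w) (C P : Esp d) (Sc : ℝ) (x : Esp d) :
    lap (fun y => w (y + C) * Complex.exp (-Complex.I * ((inner ℝ y P : ℝ):ℂ) - Complex.I * (Sc:ℂ))) x
      = (lap w (x + C) - 2 * Complex.I * fderiv ℝ w (x + C) P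
          - (((‖P‖ ^ (2:ℕ) : ℝ)):ℂ) * w (x + C))
        * Complex.exp (-Complex.I * ((inner ℝ x P : ℝ):ℂ) - Complex.I * (Sc:ℂ)) := by
  classical
  set E : Esp d → ℂ := fun y => Complex.exp (-Complex.I * ((inner ℝ y P : ℝ):ℂ) - Complex.I * (Sc:ℂ)) with hEdef
  set Ψ : Esp d →L[ℝ] ℂ := -(Complex.I • (Complex.ofRealCLM.comp (innerSL ℝ P))) with hΨdef
  have hΨ : ∀ j : Fin d, Ψ (EuclideanSpace.single j 1) = -Complex.I * ((P j : ℝ):ℂ) := by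
    intro j
    simp [hΨdef, EuclideanSpace.inner_single_right, smul_eq_mul]
  have hE : ∀ y, HasFDerivAt E (E y • Ψ) y := by
    intro y
    have h1 : HasFDerivAt (fun y' : Esp d => ((inner ℝ y' P : ℝ))) (innerSL ℝ P) y := by
      have h0 : (fun y' : Esp d => (inner ℝ y' P : ℝ)) = fun y' => innerSL ℝ P y' := by
        funext y'; rw [innerSL_apply_apply]; exact real_inner_comm P y'
      rw [h0]; exact (innerSL ℝ P).hasFDerivAt
    have h2 : HasFDerivAt (fun y' : Esp d => ((inner ℝ y' P : ℝ):ℂ))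
        (Complex.ofRealCLM.comp (innerSL ℝ P)) y :=
      Complex.ofRealCLM.hasFDerivAt.comp y h1
    have h3 : HasFDerivAt (fun y' : Esp d => -Complex.I * ((inner ℝ y' P : ℝ):ℂ) - Complex.I * (Sc:ℂ)) Ψ y := by
      have h4 := ((h2.const_smul Complex.I).neg).sub_const (Complex.I * (Sc:ℂ))
      simpa [hΨdef, smul_eq_mul, neg_mul] using h4
    simpa [hEdef] using h3.cexp
  have hwd := hw.differentiable (by simp)
  have htr : ∀ y : Esp d, HasFDerivAt (fun y' : Esp d => y' + C)
      (ContinuousLinearMap.id ℝ (Esp d)) y := fun y => (hasFDerivAt_id y).add_const C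
  have hWC : ∀ y, HasFDerivAt (fun y' => w (y' + C))
      ((fderiv ℝ w (y + C)).comp (ContinuousLinearMap.id ℝ (Esp d))) y :=
    fun y => ((hwd _).hasFDerivAt).comp y (htr y)
  have hD1 : ∀ y, HasFDerivAt (fun y' => w (y' + C) * E y')
      (w (y + C) • (E y • Ψ) + E y • ((fderiv ℝ w (y + C)).comp (ContinuousLinearMap.id ℝ (Esp d)))) y :=
    fun y => (hWC y).mul (hE y)
  have hs1 : ∀ (j : Fin d),
      (fun y => sderiv j (fun y' => w (y' + C) * E y') y)
        = fun y => fderiv ℝ w (y + C) (EuclideanSpace.single j 1) * E y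
            + w (y + C) * E y * (-Complex.I * ((P j : ℝ):ℂ)) := by
    intro j
    funext y
    show fderiv ℝ (fun y' => w (y' + C) * E y') y (EuclideanSpace.single j 1) = _
    rw [(hD1 y).fderiv]
    simp [hΨ, smul_eq_mul]
    ring
  -- second derivatives
  have hsw : ∀ j : Fin d, ContDiff ℝ (⊤ : ℕ∞) (sderiv j w) := fun j =>
    (hw.fderiv_right (by simp)).clm_apply contDiff_const
  have hG : ∀ (j : Fin d) (y : Esp d),
      HasFDerivAt (fun y' => fderiv ℝ w (y' + C) (EuclideanSpace.single j 1))
        ((fderiv ℝ (sderiv j w) (y + C)).comp (ContinuousLinearMap.id ℝ (Esp d))) y :=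
    fun j y => (((hsw j).differentiable (by simp) _).hasFDerivAt).comp y (htr y)
  have hs2 : ∀ (j : Fin d),
      sderiv j (fun y => sderiv j (fun y' => w (y' + C) * E y') y) x
        = sderiv j (sderiv j w) (x + C) * E x
          - 2 * Complex.I * (((P j : ℝ):ℂ) * fderiv ℝ w (x + C) (EuclideanSpace.single j 1)) * E x
          - ((P j : ℝ):ℂ)^2 * w (x + C) * E x := by
    intro j
    rw [hs1 j]
    have h1 := (hG j x).mul (hE x)
    have h2 := ((hWC x).mul (hE x)).mul_const (-Complex.I * ((P j : ℝ):ℂ))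
    have h3 := h1.add h2
    show fderiv ℝ _ x (EuclideanSpace.single j 1) = _
    rw [HasFDerivAt.fderiv (f := fun y => fderiv ℝ w (y + C) (EuclideanSpace.single j 1) * E y + w (y + C) * E y * (-Complex.I * ((P j : ℝ):ℂ))) h3]
    simp only [ContinuousLinearMap.add_apply, ContinuousLinearMap.smul_apply,
      ContinuousLinearMap.comp_apply, ContinuousLinearMap.coe_id', id_eq, smul_eq_mul, hΨ]
    have : fderiv ℝ (sderiv j w) (x + C) (EuclideanSpace.single j 1)
        = sderiv j (sderiv j w) (x + C) := rfl
    rw [this]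
    linear_combination (w (x + C) * E x * ((P j : ℝ):ℂ)^2) * Complex.I_sq
  have hlap : lap (fun y => w (y + C) * E y) x
      = ∑ j, (sderiv j (sderiv j w) (x + C) * E x
          - 2 * Complex.I * (((P j : ℝ):ℂ) * fderiv ℝ w (x + C) (EuclideanSpace.single j 1)) * E x
          - ((P j : ℝ):ℂ)^2 * w (x + C) * E x) :=
    Finset.sum_congr rfl fun j _ => hs2 j
  have hPsum : ((‖P‖ ^ (2:ℕ) : ℝ):ℂ) = ∑ j : Fin d, ((P j : ℝ):ℂ)^(2:ℕ) := by
    rw [esp_norm_sq]; push_cast; rfl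
  have hfP : fderiv ℝ w (x + C) P
      = ∑ j, ((P j : ℝ):ℂ) * fderiv ℝ w (x + C) (EuclideanSpace.single j 1) := clm_sum _ _
  have hlapw : lap w (x + C) = ∑ j, sderiv j (sderiv j w) (x + C) := rfl
  show lap (fun y => w (y + C) * E y) x = _
  rw [hlap, hlapw, hfP, hPsum]
  simp only [sub_mul, Finset.sum_mul, Finset.mul_sum]
  rw [← Finset.sum_sub_distrib, ← Finset.sum_sub_distrib]


/-- Generalized Avron–Herbst formula: if `v` solves `i∂ₜv + ½Δv = h(t)|v|^{2σ}v`, then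
with `p(t) = ∫₀ᵗ b`, `c(t) = ∫₀ᵗ p`, `S(t) = ½∫₀ᵗ |p|²`, the function
`u(t,x) = v(t, x + c(t)) e^{−i⟨x,p(t)⟩ − iS(t)}` solves
`i∂ₜu + ½Δu = ⟨b(t),x⟩u + h(t)|u|^{2σ}u`. -/
theorem avron_herbst
    (d : ℕ) (hd : 1 ≤ d) (σ : ℝ) (hσ : 0 < σ)
    (h : ℝ → ℝ) (hh : Continuous h)
    (b : ℝ → Esp d) (hb : Continuous b)
    (v : ℝ → Esp d → ℂ) (hv : ContDiff ℝ (⊤ : ℕ∞) (Function.uncurry v))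
    (hveq : ∀ (t : ℝ) (x : Esp d),
      Complex.I * deriv (fun s => v s x) t + (1 / 2) * lap (v t) x
        = ((h t : ℝ) : ℂ) * (((‖v t x‖ ^ (2:ℕ)) ^ σ : ℝ) : ℂ) * v t x)
    (p c : ℝ → Esp d) (S : ℝ → ℝ)
    (hp : ∀ t, p t = ∫ τ in (0:ℝ)..t, b τ)
    (hc : ∀ t, c t = ∫ τ in (0:ℝ)..t, p τ)
    (hS : ∀ t, S t = (1 / 2) * ∫ τ in (0:ℝ)..t, ‖p τ‖ ^ (2:ℕ))
    (u : ℝ → Esp d → ℂ)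
    (hu : ∀ (t : ℝ) (x : Esp d),
      u t x = v t (x + c t)
        * Complex.exp (-Complex.I * (((inner ℝ x (p t) : ℝ)) : ℂ)
            - Complex.I * ((S t : ℝ) : ℂ))) :
    ∀ (t : ℝ) (x : Esp d),
      Complex.I * deriv (fun s => u s x) t + (1 / 2) * lap (u t) x
        = (((inner ℝ (b t) x : ℝ)) : ℂ) * u t x
          + ((h t : ℝ) : ℂ) * (((‖u t x‖ ^ (2:ℕ)) ^ σ : ℝ) : ℂ) * u t x := by
  intro t x
  have hvd := hv.differentiable (by simp)
  have hpd : ∀ s, HasDerivAt p (b s) s := by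
    intro s
    have h1 : HasDerivAt (fun r => ∫ τ in (0:ℝ)..r, b τ) (b s) s :=
      intervalIntegral.integral_hasDerivAt_right (hb.intervalIntegrable 0 s)
        (hb.stronglyMeasurableAtFilter _ _) hb.continuousAt
    rw [funext hp]; exact h1
  have hpc : Continuous p := by
    have : Differentiable ℝ p := fun s => (hpd s).differentiableAt
    exact this.continuous
  have hcd : HasDerivAt c (p t) t := by
    have h1 : HasDerivAt (fun r => ∫ τ in (0:ℝ)..r, p τ) (p t) t :=
      intervalIntegral.integral_hasDerivAt_right (hpc.intervalIntegrable 0 t)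
        (hpc.stronglyMeasurableAtFilter _ _) hpc.continuousAt
    rw [funext hc]; exact h1
  have hSd : HasDerivAt S ((1/2) * ‖p t‖ ^ (2:ℕ)) t := by
    have hq : Continuous fun τ => ‖p τ‖ ^ (2:ℕ) := hpc.norm.pow 2
    have h1 : HasDerivAt (fun r => ∫ τ in (0:ℝ)..r, ‖p τ‖ ^ (2:ℕ)) (‖p t‖ ^ (2:ℕ)) t :=
      intervalIntegral.integral_hasDerivAt_right (hq.intervalIntegrable 0 t)
        (hq.stronglyMeasurableAtFilter _ _) hq.continuousAt
    have h2 := h1.const_mul (1/2 : ℝ)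
    rw [funext hS]; exact h2
  set y := x + c t with hy
  -- time derivative of the first factor
  have hA : HasDerivAt (fun s => v s (x + c s))
      (fderiv ℝ (Function.uncurry v) (t, y) (1, p t)) t := by
    have h1 : HasDerivAt (fun s => ((s, x + c s) : ℝ × Esp d)) (1, p t) t :=
      HasDerivAt.prodMk (hasDerivAt_id t) (hcd.const_add x)
    exact ((hvd _).hasFDerivAt).comp_hasDerivAt t h1
  have hdec : fderiv ℝ (Function.uncurry v) (t, y) (1, p t)
      = deriv (fun s => v s y) t + fderiv ℝ (v t) y (p t) := by
    have e1 : HasDerivAt (fun s => v s y) (fderiv ℝ (Function.uncurry v) (t, y) (1, 0)) t :=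
      ((hvd _).hasFDerivAt).comp_hasDerivAt t
        (HasDerivAt.prodMk (hasDerivAt_id t) (hasDerivAt_const t y))
    have e2 : HasFDerivAt (v t)
        ((fderiv ℝ (Function.uncurry v) (t, y)).comp (ContinuousLinearMap.inr ℝ ℝ (Esp d))) y :=
      ((hvd _).hasFDerivAt).comp y (HasFDerivAt.prodMk (hasFDerivAt_const t y) (hasFDerivAt_id y))
    rw [e1.deriv, e2.fderiv]
    have h3 : ((1:ℝ), p t) = ((1:ℝ), (0 : Esp d)) + ((0:ℝ), p t) := by simp
    rw [h3, map_add]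
    simp [ContinuousLinearMap.comp_apply]
  -- phase derivative
  have hip : HasDerivAt (fun s => (inner ℝ x (p s) : ℝ)) (inner ℝ x (b t)) t := by
    have := (hasDerivAt_const t x).inner ℝ (hpd t)
    simpa using this
  have hph : HasDerivAt
      (fun s => -Complex.I * ((inner ℝ x (p s) : ℝ):ℂ) - Complex.I * ((S s : ℝ):ℂ))
      (-Complex.I * ((inner ℝ x (b t) : ℝ):ℂ)
        - Complex.I * (((1/2) * ‖p t‖ ^ (2:ℕ) : ℝ):ℂ)) t :=
    ((hip.ofReal_comp).const_mul (-Complex.I)).sub ((hSd.ofReal_comp).const_mul Complex.I)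
  have hexp := hph.cexp
  have hU : HasDerivAt (fun s => u s x)
      ((deriv (fun s => v s y) t + fderiv ℝ (v t) y (p t))
          * Complex.exp (-Complex.I * ((inner ℝ x (p t) : ℝ):ℂ) - Complex.I * ((S t : ℝ):ℂ))
        + v t y * (Complex.exp (-Complex.I * ((inner ℝ x (p t) : ℝ):ℂ) - Complex.I * ((S t : ℝ):ℂ))
            * (-Complex.I * ((inner ℝ x (b t) : ℝ):ℂ)
                - Complex.I * (((1/2) * ‖p t‖ ^ (2:ℕ) : ℝ):ℂ)))) t := by
    have h1 := hA.mul hexp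
    rw [show (fun s => u s x)
        = fun s => v s (x + c s)
            * Complex.exp (-Complex.I * ((inner ℝ x (p s) : ℝ):ℂ) - Complex.I * ((S s : ℝ):ℂ))
      from funext fun s => hu s x]
    rw [← hdec]
    exact h1
  -- spatial derivatives
  have hw : ContDiff ℝ (⊤ : ℕ∞) (v t) := hv.comp (contDiff_const.prodMk contDiff_id)
  have hlapu : lap (u t) x
      = (lap (v t) y - 2 * Complex.I * fderiv ℝ (v t) y (p t)
          - (((‖p t‖ ^ (2:ℕ) : ℝ)):ℂ) * v t y)
        * Complex.exp (-Complex.I * ((inner ℝ x (p t) : ℝ):ℂ) - Complex.I * ((S t : ℝ):ℂ)) := by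
    rw [show u t = fun y' => v t (y' + c t)
        * Complex.exp (-Complex.I * ((inner ℝ y' (p t) : ℝ):ℂ) - Complex.I * ((S t : ℝ):ℂ))
      from funext fun y' => hu t y']
    exact lap_formula d (v t) hw (c t) (p t) (S t) x
  -- norms
  have hnorm : ‖u t x‖ = ‖v t y‖ := by
    rw [hu t x, norm_mul]
    have : ‖Complex.exp (-Complex.I * ((inner ℝ x (p t) : ℝ):ℂ) - Complex.I * ((S t : ℝ):ℂ))‖ = 1 := by
      rw [Complex.norm_exp]
      simp
    rw [this, mul_one]
  have hnorm' : (((‖u t x‖ ^ (2:ℕ)) ^ σ : ℝ):ℂ) = (((‖v t y‖ ^ (2:ℕ)) ^ σ : ℝ):ℂ) := by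
    rw [hnorm]
  have hba : ((inner ℝ (b t) x : ℝ):ℂ) = ((inner ℝ x (b t) : ℝ):ℂ) := by
    rw [real_inner_comm]
  -- final algebra
  rw [hU.deriv, hlapu, hnorm', hba, hu t x]
  have hv0 := hveq t y
  set Ex := Complex.exp (-Complex.I * ((inner ℝ x (p t) : ℝ):ℂ) - Complex.I * ((S t : ℝ):ℂ))
  push_cast
  linear_combination Ex * hv0
    + (- (v t y * ((inner ℝ x (b t) : ℝ):ℂ) * Ex)
        - (1/2) * ((‖p t‖ : ℝ):ℂ)^(2:ℕ) * v t y * Ex) * Complex.I_sq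
end
end
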